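/- arXiv:2305.18130 — 2 statements merged into one kernel-verified Lean document; each statement's English description precedes it below -/
import Mathlib

section
/- Under the standing setup, the set R'' = {v ∈ V(G) : x_v > 4α x_z} satisfies |R''| < 3(h+1)/α. -/
open SimpleGraph Matrix

/-- The adjacency matrix of a simple graph, over `ℝ`. -/
noncomputable def adjMat {V : Type*} (G : SimpleGraph V) : Matrix V V ℝ :=
  fun a b => by classical exact if G.Adj a b then 1 else 0

/-- The spectral radius of a graph: the largest (real) eigenvalue of its adjacency
matrix, expressed as the supremum of the real spectrum. -/
noncomputable def specRad {V : Type*} [Fintype V] [DecidableEq V] (G : SimpleGraph V) : ℝ :=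
  sSup (spectrum ℝ (adjMat G))

/-- A linear forest: an acyclic graph in which every vertex has degree at most 2,
i.e. every connected component is a path. -/
def IsLinearForest {V : Type*} (H : SimpleGraph V) : Prop :=
  H.IsAcyclic ∧ ∀ v, {w | H.Adj v w}.ncard ≤ 2

/-- `G` contains some member of `𝓛 s`, the family of linear forests with `s` edges. -/
def ContainsLinForest {V : Type*} (G : SimpleGraph V) (s : ℕ) : Prop :=
  ∃ H : SimpleGraph V, H ≤ G ∧ IsLinearForest H ∧ H.edgeSet.ncard = s

/-- `G` belongs to `Ex_sp(n, {K_{k+1}, 𝓛_s})`: it is `{K_{k+1}, 𝓛_s}`-free and has the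
maximum spectral radius among all such graphs on `n` vertices. -/
def IsExtremal (n k s : ℕ) (G : SimpleGraph (Fin n)) : Prop :=
  G.CliqueFree (k + 1) ∧ ¬ ContainsLinForest G s ∧
    ∀ H : SimpleGraph (Fin n), H.CliqueFree (k + 1) → ¬ ContainsLinForest H s →
      specRad H ≤ specRad G

/-- The degree of `v` in `G`. -/
noncomputable def degOf {V : Type*} (G : SimpleGraph V) (v : V) : ℕ :=
  {w | G.Adj v w}.ncard

lemma mem_spectrum_of_eigvec {n : ℕ} (M : Matrix (Fin n) (Fin n) ℝ) (μ : ℝ)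
    (y : Fin n → ℝ) (hy : y ≠ 0) (heq : M *ᵥ y = μ • y) :
    μ ∈ spectrum ℝ M := by
  rw [spectrum.mem_iff]
  intro hunit
  have hdet : (algebraMap ℝ (Matrix (Fin n) (Fin n) ℝ) μ - M).det = 0 := by
    rw [← Matrix.exists_mulVec_eq_zero_iff]
    refine ⟨y, hy, ?_⟩
    have halg : algebraMap ℝ (Matrix (Fin n) (Fin n) ℝ) μ = μ • (1 : Matrix (Fin n) (Fin n) ℝ) := by
      rw [Algebra.algebraMap_eq_smul_one]
    rw [halg, Matrix.sub_mulVec, Matrix.smul_mulVec, Matrix.one_mulVec, heq, sub_self]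
  have := (Matrix.isUnit_iff_isUnit_det _).mp hunit
  rw [hdet] at this
  exact (this.ne_zero) rfl

lemma spectrum_adjMat_le {n : ℕ} (hn : 0 < n) (H : SimpleGraph (Fin n)) (μ : ℝ)
    (hμ : μ ∈ spectrum ℝ (adjMat H)) : μ ≤ n := by
  classical
  rw [spectrum.mem_iff] at hμ
  have hdet : (algebraMap ℝ (Matrix (Fin n) (Fin n) ℝ) μ - adjMat H).det = 0 := by
    by_contra hne
    exact hμ ((Matrix.isUnit_iff_isUnit_det _).mpr (isUnit_iff_ne_zero.mpr hne))
  obtain ⟨w, hw0, hw⟩ := (Matrix.exists_mulVec_eq_zero_iff).mpr hdet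
  have heq : adjMat H *ᵥ w = μ • w := by
    have halg : algebraMap ℝ (Matrix (Fin n) (Fin n) ℝ) μ = μ • (1 : Matrix (Fin n) (Fin n) ℝ) := by
      rw [Algebra.algebraMap_eq_smul_one]
    rw [halg, Matrix.sub_mulVec, Matrix.smul_mulVec, Matrix.one_mulVec] at hw
    exact (sub_eq_zero.mp hw).symm
  obtain ⟨i, -, hi⟩ := Finset.exists_max_image Finset.univ (fun j => |w j|)
    ⟨⟨0, hn⟩, Finset.mem_univ _⟩
  have hipos : 0 < |w i| := by
    obtain ⟨j, hj⟩ := Function.ne_iff.mp hw0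
    exact lt_of_lt_of_le (abs_pos.mpr hj) (hi j (Finset.mem_univ j))
  have hrow : μ * w i = ∑ j, adjMat H i j * w j := by
    have h := congrFun heq i
    simpa [Matrix.mulVec, dotProduct, Pi.smul_apply, smul_eq_mul] using h.symm
  have habs : |μ| * |w i| ≤ (n : ℝ) * |w i| := by
    calc |μ| * |w i| = |μ * w i| := (abs_mul μ (w i)).symm
    _ = |∑ j, adjMat H i j * w j| := by rw [hrow]
    _ ≤ ∑ j, |adjMat H i j * w j| := Finset.abs_sum_le_sum_abs _ _
    _ ≤ ∑ _j : Fin n, |w i| := by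
        refine Finset.sum_le_sum fun j _ => ?_
        rw [abs_mul]
        have h1 : |adjMat H i j| ≤ 1 := by by_cases hij : H.Adj i j <;> simp [adjMat, hij]
        have h2 : |w j| ≤ |w i| := hi j (Finset.mem_univ j)
        calc |adjMat H i j| * |w j| ≤ 1 * |w i| :=
              mul_le_mul h1 h2 (abs_nonneg _) one_pos.le
        _ = |w i| := one_mul _
    _ = (n:ℝ) * |w i| := by simp [Finset.sum_const, Finset.card_univ, nsmul_eq_mul]
  have hfin : |μ| ≤ n := le_of_mul_le_mul_right habs hipos
  exact le_trans (le_abs_self μ) hfin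

lemma exists_matching {n : ℕ} (G : SimpleGraph (Fin n)) :
    ∀ (m : ℕ) (S F : Finset (Fin n)), m ≤ S.card → Disjoint S F →
      (∀ v ∈ S, 2 * m + F.card ≤ {u | G.Adj v u}.ncard) →
      ∃ (M : Finset (Sym2 (Fin n))) (T : Finset (Fin n)),
        M.card = m ∧ T.card ≤ 2 * m ∧ (∀ e ∈ M, e ∈ G.edgeSet) ∧
        (∀ e ∈ M, ∀ w, w ∈ e → w ∈ T) ∧
        (∀ e ∈ M, ∀ f ∈ M, e ≠ f → ∀ w, w ∈ e → w ∉ f) ∧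
        Disjoint T F := by
  classical
  have hncard : ∀ v, {u | G.Adj v u}.ncard = (Finset.univ.filter (fun u => G.Adj v u)).card := by
    intro v
    rw [Set.ncard_eq_toFinset_card', Set.toFinset_setOf]
  intro m
  induction m with
  | zero =>
    intro S F _ _ _
    exact ⟨∅, ∅, by simp, by simp, by simp, by simp, by simp, by simp⟩
  | succ m ih =>
    intro S F hcard hdisj hdeg
    obtain ⟨v, hv⟩ : S.Nonempty := Finset.card_pos.mp (by omega)
    obtain ⟨M, T, hM1, hT2, hMe, hMT, hMp, hTF⟩ :=
      ih (S.erase v) (insert v F)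
        (by rw [Finset.card_erase_of_mem hv]; omega)
        (Finset.disjoint_insert_right.mpr
          ⟨Finset.notMem_erase v S, Finset.disjoint_of_subset_left (Finset.erase_subset v S) hdisj⟩)
        (fun w hw => by
          have h1 := hdeg w (Finset.mem_of_mem_erase hw)
          have h2 := Finset.card_insert_le v F
          omega)
    have hvF : v ∉ F := Finset.disjoint_left.mp hdisj hv
    have hvT : v ∉ T := fun hvT => (Finset.disjoint_left.mp hTF hvT) (Finset.mem_insert_self v F)
    have hcand : ((Finset.univ.filter (fun u => G.Adj v u)) \ (F ∪ T)).Nonempty := by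
      rw [← Finset.card_pos]
      have h1 := Finset.card_union_le F T
      have h2 := hdeg v hv
      rw [hncard v] at h2
      have h3 := Finset.le_card_sdiff (F ∪ T) (Finset.univ.filter (fun u => G.Adj v u))
      omega
    obtain ⟨u, hu⟩ := hcand
    rw [Finset.mem_sdiff, Finset.mem_filter, Finset.mem_union] at hu
    obtain ⟨⟨-, hadj⟩, hunotFT⟩ := hu
    push_neg at hunotFT
    obtain ⟨huF, huT⟩ := hunotFT
    have hnewM : s(v, u) ∉ M := fun hmem => hvT (hMT _ hmem v (Sym2.mem_mk_left v u))
    refine ⟨insert s(v, u) M, insert v (insert u T), ?_, ?_, ?_, ?_, ?_, ?_⟩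
    · rw [Finset.card_insert_of_notMem hnewM, hM1]
    · have h1 := Finset.card_insert_le v (insert u T)
      have h2 := Finset.card_insert_le u T
      omega
    · intro e he
      rcases Finset.mem_insert.mp he with rfl | he'
      · exact (G.mem_edgeSet).mpr hadj
      · exact hMe e he'
    · intro e he w hwe
      rcases Finset.mem_insert.mp he with rfl | he'
      · rcases Sym2.mem_iff.mp hwe with rfl | rfl
        · exact Finset.mem_insert_self _ _
        · exact Finset.mem_insert_of_mem (Finset.mem_insert_self _ _)
      · exact Finset.mem_insert_of_mem (Finset.mem_insert_of_mem (hMT e he' w hwe))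
    · intro e he f hf hef w hwe hwf
      rcases Finset.mem_insert.mp he with rfl | he' <;>
        rcases Finset.mem_insert.mp hf with hf0 | hf'
      · exact hef hf0.symm
      · have hwT : w ∈ T := hMT f hf' w hwf
        rcases Sym2.mem_iff.mp hwe with rfl | rfl
        · exact hvT hwT
        · exact huT hwT
      · have hwT : w ∈ T := hMT e he' w hwe
        rw [hf0] at hwf
        rcases Sym2.mem_iff.mp hwf with rfl | rfl
        · exact hvT hwT
        · exact huT hwT
      · exact hMp e he' f hf' hef w hwe hwf
    · rw [Finset.disjoint_insert_left, Finset.disjoint_insert_left]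
      exact ⟨hvF, huF, Finset.disjoint_of_subset_right (Finset.subset_insert v F) hTF⟩

lemma containsLinForest_of_matching {n : ℕ} (G : SimpleGraph (Fin n)) (s : ℕ)
    (M : Finset (Sym2 (Fin n))) (hcard : M.card = s)
    (hMe : ∀ e ∈ M, e ∈ G.edgeSet)
    (hMp : ∀ e ∈ M, ∀ f ∈ M, e ≠ f → ∀ w, w ∈ e → w ∉ f) :
    ContainsLinForest G s := by
  classical
  set H := SimpleGraph.fromEdgeSet (M : Set (Sym2 (Fin n))) with hH
  have hHadj : ∀ {a b : Fin n}, H.Adj a b ↔ s(a, b) ∈ M ∧ a ≠ b := by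
    intro a b
    rw [hH, SimpleGraph.fromEdgeSet_adj]
    simp
  have hle : H ≤ G := by
    intro a b hab
    exact (G.mem_edgeSet).mp (hMe _ (hHadj.mp hab).1)
  have huniq : ∀ {a b c : Fin n}, H.Adj a b → H.Adj a c → b = c := by
    intro a b c hab hac
    rw [hHadj] at hab hac
    by_cases hef : s(a, b) = s(a, c)
    · exact Sym2.congr_right.mp hef
    · exact absurd (Sym2.mem_mk_left a c)
        (hMp _ hab.1 _ hac.1 hef a (Sym2.mem_mk_left a b))
  have hacyc : H.IsAcyclic := by
    rw [isAcyclic_iff_forall_adj_isBridge]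
    intro v w hvw
    rw [isBridge_iff]
    rintro ⟨p⟩
    cases p with
    | nil => exact hvw.ne rfl
    | cons hadj q =>
      rw [SimpleGraph.deleteEdges_adj] at hadj
      obtain ⟨h1, h2⟩ := hadj
      have hb : _ = w := huniq h1 hvw
      apply h2
      subst hb
      exact Set.mem_singleton _
  have hdeg : ∀ v, {w | H.Adj v w}.ncard ≤ 2 := by
    intro v
    have h1 : {w | H.Adj v w}.ncard ≤ 1 := by
      rw [Set.ncard_le_one (Set.toFinite _)]
      intro a ha b hb
      exact huniq ha hb
    omega
  have hedge : H.edgeSet.ncard = s := by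
    have heq : H.edgeSet = (M : Set (Sym2 (Fin n))) := by
      rw [hH, SimpleGraph.edgeSet_fromEdgeSet]
      ext e
      simp only [Set.mem_diff, Finset.mem_coe, Set.mem_setOf_eq, and_iff_left_iff_imp]
      exact fun he hd => (G.not_isDiag_of_mem_edgeSet (hMe e he)) hd
    rw [heq, Set.ncard_coe_finset, hcard]
  exact ⟨H, hle, ⟨hacyc, hdeg⟩, hedge⟩


set_option maxHeartbeats 1000000 in
/-- Under the standing setup, `|R''| < 3(h+1)/α` where `R'' = {v : x_v > 4α x_z}`. -/
theorem card_R''_lt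
    (k s n : ℕ) (hk : 2 ≤ k) (hs : 3 ≤ s)
    (h : ℕ) (hh : h = (s - 1) / 2) (α : ℝ) (hα : α = 1 / (36 * ((h : ℝ) + 1) ^ 3))
    (hn : 28 * ((h : ℝ) + 1) ^ 2 / α ^ 2 ≤ (n : ℝ))
    (G : SimpleGraph (Fin n)) (hG : IsExtremal n k s G)
    (x : Fin n → ℝ) (hxpos : ∀ v, 0 < x v) (hxnorm : ∑ v, x v ^ 2 = 1)
    (heig : adjMat G *ᵥ x = specRad G • x)
    (z : Fin n) (hz : ∀ v, x v ≤ x z) :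
    ((Set.ncard {v : Fin n | 4 * α * x z < x v} : ℝ)) < 3 * ((h : ℝ) + 1) / α := by
  classical
  obtain ⟨hclq, hlinfree, hmax⟩ := hG
  have hαpos : 0 < α := by rw [hα]; positivity
  have hH1 : (2:ℝ) ≤ (h:ℝ) + 1 := by
    have h1 : 1 ≤ h := by omega
    have h2 : (1:ℝ) ≤ (h:ℝ) := by exact_mod_cast h1
    linarith
  have hH1pos : (0:ℝ) < (h:ℝ) + 1 := by linarith
  have hH1ne : ((h:ℝ) + 1) ≠ 0 := ne_of_gt hH1pos
  have h256 : (256:ℝ) ≤ ((h:ℝ) + 1)^8 := by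
    calc (256:ℝ) = 2^8 := by norm_num
    _ ≤ ((h:ℝ) + 1)^8 := by gcongr <;> norm_num
  have hn' : 36288 * ((h:ℝ)+1)^8 ≤ (n:ℝ) := by
    have he : 28 * ((h:ℝ)+1)^2 / α^2 = 36288 * ((h:ℝ)+1)^8 := by
      rw [hα]; field_simp; try ring
    rw [he] at hn; exact hn
  have hn1 : (1:ℝ) ≤ (n:ℝ) := by nlinarith
  have hnposR : (0:ℝ) < (n:ℝ) := lt_of_lt_of_le one_pos hn1
  have hnpos : 0 < n := by exact_mod_cast hnposR
  have hn2 : 2 ≤ n := by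
    have hr : (2:ℝ) ≤ (n:ℝ) := by nlinarith
    exact_mod_cast hr
  -- star graph
  set v0 : Fin n := ⟨0, hnpos⟩ with hv0
  set Gs : SimpleGraph (Fin n) := SimpleGraph.fromRel (fun a _ => a = v0) with hGsdef
  have hGsadj : ∀ a b : Fin n, Gs.Adj a b ↔ a ≠ b ∧ (a = v0 ∨ b = v0) := fun a b =>
    SimpleGraph.fromRel_adj _ a b
  have hGsclq : Gs.CliqueFree (k + 1) := by
    intro t ht
    have hcard3 : 3 ≤ t.card := by rw [ht.2]; omega
    obtain ⟨a, ha⟩ : t.Nonempty := Finset.card_pos.mp (by omega)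
    obtain ⟨b, hb⟩ : (t.erase a).Nonempty := Finset.card_pos.mp
      (show 0 < (t.erase a).card by rw [Finset.card_erase_of_mem ha]; omega)
    obtain ⟨c, hc⟩ : ((t.erase a).erase b).Nonempty := Finset.card_pos.mp
      (show 0 < ((t.erase a).erase b).card by
        rw [Finset.card_erase_of_mem hb, Finset.card_erase_of_mem ha]; omega)
    have hba : b ≠ a := Finset.ne_of_mem_erase hb
    have hcb : c ≠ b := Finset.ne_of_mem_erase hc
    have hca : c ≠ a := Finset.ne_of_mem_erase (Finset.mem_of_mem_erase hc)
    have hbt : b ∈ t := Finset.mem_of_mem_erase hb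
    have hct : c ∈ t := Finset.mem_of_mem_erase (Finset.mem_of_mem_erase hc)
    have hab : Gs.Adj a b := ht.1 (Finset.mem_coe.mpr ha) (Finset.mem_coe.mpr hbt) hba.symm
    have hac : Gs.Adj a c := ht.1 (Finset.mem_coe.mpr ha) (Finset.mem_coe.mpr hct) hca.symm
    have hbc : Gs.Adj b c := ht.1 (Finset.mem_coe.mpr hbt) (Finset.mem_coe.mpr hct) hcb.symm
    by_cases hav : a = v0
    · rcases ((hGsadj b c).mp hbc).2 with h2 | h2
      · exact hba (h2.trans hav.symm)
      · exact hca (h2.trans hav.symm)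
    · have hb0 : b = v0 := ((hGsadj a b).mp hab).2.resolve_left hav
      have hc0 : c = v0 := ((hGsadj a c).mp hac).2.resolve_left hav
      exact hcb (hc0.trans hb0.symm)
  have hGslin : ¬ ContainsLinForest Gs s := by
    rintro ⟨H, hle, ⟨-, hdegH⟩, hcardH⟩
    have hsub : H.edgeSet ⊆ (fun w => s(v0, w)) '' {w | H.Adj v0 w} := by
      intro e he
      induction e using Sym2.ind with
      | _ a b =>
        have hab : H.Adj a b := (H.mem_edgeSet).mp he
        rcases ((hGsadj a b).mp (hle hab)).2 with h1 | h1
        · subst h1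
          exact ⟨b, hab, rfl⟩
        · subst h1
          exact ⟨a, hab.symm, Sym2.eq_swap⟩
    have h2 : H.edgeSet.ncard ≤ 2 :=
      le_trans (Set.ncard_le_ncard hsub (Set.toFinite _))
        (le_trans (Set.ncard_image_le (Set.toFinite _)) (hdegH v0))
    rw [hcardH] at h2
    omega
  -- eigenvector of the star
  have hμnonneg : (0:ℝ) ≤ (n:ℝ) - 1 := by linarith
  set μ := Real.sqrt ((n:ℝ) - 1) with hμdef
  set y : Fin n → ℝ := fun v => if v = v0 then μ else 1 with hy
  have heigy : adjMat Gs *ᵥ y = μ • y := by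
    funext v
    simp only [Matrix.mulVec, dotProduct, Pi.smul_apply, smul_eq_mul]
    by_cases hv : v = v0
    · have hterm : ∀ j : Fin n, adjMat Gs v j * y j = if j = v0 then 0 else 1 := by
        intro j
        by_cases hj : j = v0
        · subst hj
          have hnadj : ¬ Gs.Adj v v0 := by
            rw [hGsadj]
            rintro ⟨hne, -⟩
            exact hne hv
          simp [adjMat, hnadj]
        · have hadj : Gs.Adj v j := (hGsadj v j).mpr
            ⟨fun hh => hj (hh.symm.trans hv), Or.inl hv⟩
          simp [adjMat, hadj, hy, hj]
      rw [Finset.sum_congr rfl fun j _ => hterm j]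
      have hsum : ∑ j : Fin n, (if j = v0 then (0:ℝ) else 1)
          = (∑ _j : Fin n, (1:ℝ)) - ∑ j : Fin n, (if j = v0 then (1:ℝ) else 0) := by
        rw [← Finset.sum_sub_distrib]
        exact Finset.sum_congr rfl fun j _ => by by_cases hj : j = v0 <;> simp [hj]
      rw [hsum, Finset.sum_const, Finset.card_univ, Fintype.card_fin, nsmul_eq_mul, mul_one,
        Finset.sum_ite_eq' Finset.univ v0 (fun _ => (1:ℝ))]
      have hyv : y v = μ := by rw [hy]; simp [hv]
      rw [hyv]
      simp only [Finset.mem_univ, if_true]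
      rw [hμdef, Real.mul_self_sqrt hμnonneg]
    · have hterm : ∀ j : Fin n, adjMat Gs v j * y j = if j = v0 then μ else 0 := by
        intro j
        by_cases hj : j = v0
        · subst hj
          have hadj : Gs.Adj v v0 := (hGsadj v v0).mpr ⟨hv, Or.inr rfl⟩
          simp [adjMat, hadj, hy]
        · have hnadj : ¬ Gs.Adj v j := by
            rw [hGsadj]
            rintro ⟨-, h1 | h1⟩
            · exact hv h1
            · exact hj h1
          simp [adjMat, hnadj, hj]
      rw [Finset.sum_congr rfl fun j _ => hterm j,
        Finset.sum_ite_eq' Finset.univ v0 (fun _ => μ)]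
      have hyv : y v = 1 := by rw [hy]; simp [hv]
      rw [hyv]
      simp
  have hy0 : y ≠ 0 := by
    intro h0
    have hv1 : (⟨1, by omega⟩ : Fin n) ≠ v0 := by
      simp [hv0, Fin.ext_iff]
    have hc := congrFun h0 (⟨1, by omega⟩ : Fin n)
    rw [hy] at hc
    simp only [hv1, if_neg, Pi.zero_apply] at hc
    exact one_ne_zero hc
  have hmem : μ ∈ spectrum ℝ (adjMat Gs) := mem_spectrum_of_eigvec _ μ y hy0 heigy
  have hbddGs : BddAbove (spectrum ℝ (adjMat Gs)) :=
    ⟨(n:ℝ), fun a ha => spectrum_adjMat_le hnpos Gs a ha⟩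
  have hrad : μ ≤ specRad G :=
    le_trans (le_csSup hbddGs hmem) (hmax Gs hGsclq hGslin)
  set ρ := specRad G with hρdef
  have hρ36 : 36 * ((h:ℝ)+1)^4 ≤ ρ := by
    have hsq : (36*((h:ℝ)+1)^4)^2 ≤ (n:ℝ) - 1 := by
      have hr : (36*((h:ℝ)+1)^4)^2 = 1296 * ((h:ℝ)+1)^8 := by ring
      rw [hr]; nlinarith
    have hle2 : 36*((h:ℝ)+1)^4 ≤ μ := (Real.le_sqrt (by positivity) hμnonneg).mpr hsq
    linarith
  have hρpos : 0 < ρ := lt_of_lt_of_le (by positivity) hρ36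
  -- row sums
  have hrow : ∀ v, ρ * x v = ∑ u ∈ Finset.univ.filter (fun u => G.Adj v u), x u := by
    intro v
    have hv := congrFun heig v
    simp only [Matrix.mulVec, dotProduct, Pi.smul_apply, smul_eq_mul] at hv
    rw [← hv, Finset.sum_filter]
    exact Finset.sum_congr rfl fun j _ => by by_cases hj : G.Adj v j <;> simp [adjMat, hj]
  have hs2h : (s:ℝ) ≤ 2*((h:ℝ)+1) := by
    have hsn : s ≤ 2*h + 2 := by omega
    have hc : (s:ℝ) ≤ ((2*h+2 : ℕ) : ℝ) := by exact_mod_cast hsn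
    push_cast at hc
    linarith
  have hdeg2s : ∀ v : Fin n, 4*α*(x z) < x v → 2*s ≤ {u | G.Adj v u}.ncard := by
    intro v hv
    have hxz : 0 < x z := hxpos z
    set d := (Finset.univ.filter (fun u => G.Adj v u)).card with hd
    have hnc : {u | G.Adj v u}.ncard = d := by
      rw [Set.ncard_eq_toFinset_card', Set.toFinset_setOf]
    have hsumle : ∑ u ∈ Finset.univ.filter (fun u => G.Adj v u), x u ≤ (d:ℝ) * x z := by
      calc ∑ u ∈ Finset.univ.filter (fun u => G.Adj v u), x u
          ≤ (Finset.univ.filter (fun u => G.Adj v u)).card • x z :=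
            Finset.sum_le_card_nsmul _ _ _ (fun u _ => hz u)
      _ = (d:ℝ) * x z := by rw [nsmul_eq_mul]
    have h1 : ρ * x v ≤ (d:ℝ) * x z := by rw [hrow v]; exact hsumle
    have h2 : ρ * (4*α*(x z)) < ρ * x v := mul_lt_mul_of_pos_left hv hρpos
    have h4 : (4*α*ρ) * x z < (d:ℝ) * x z := by nlinarith
    have h3 : 4*α*ρ < (d:ℝ) := lt_of_mul_lt_mul_right h4 hxz.le
    have h5 : 4*α*(36*((h:ℝ)+1)^4) ≤ 4*α*ρ := by
      have hm := mul_le_mul_of_nonneg_left hρ36 (show (0:ℝ) ≤ 4*α by positivity)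
      linarith
    have h6 : 4*α*(36*((h:ℝ)+1)^4) = 4*((h:ℝ)+1) := by
      rw [hα]; field_simp; try ring
    have h7 : ((2*s : ℕ):ℝ) < (d:ℝ) := by push_cast; linarith
    have h8 : 2*s ≤ d := le_of_lt (by exact_mod_cast h7)
    rw [hnc]; exact h8
  -- final contradiction
  by_contra hcon
  push_neg at hcon
  set R : Set (Fin n) := {v : Fin n | 4 * α * x z < x v} with hR
  have hSfin : R.Finite := Set.toFinite _
  have hcardS : hSfin.toFinset.card = R.ncard := (Set.ncard_eq_toFinset_card R hSfin).symm
  have hα108 : 3*((h:ℝ)+1)/α = 108*((h:ℝ)+1)^4 := by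
    rw [hα]; field_simp; try ring
  have hcube : (8:ℝ) ≤ ((h:ℝ)+1)^3 := by
    calc (8:ℝ) = 2^3 := by norm_num
    _ ≤ ((h:ℝ)+1)^3 := by gcongr <;> norm_num
  have hsR : (s:ℝ) ≤ (R.ncard : ℝ) := by
    rw [hα108] at hcon
    nlinarith [mul_le_mul_of_nonneg_right hcube (le_of_lt hH1pos)]
  have hsS : s ≤ hSfin.toFinset.card := by
    rw [hcardS]; exact_mod_cast hsR
  obtain ⟨M, T, hM1, -, hMe, -, hMp, -⟩ :=
    exists_matching G s hSfin.toFinset ∅ hsS (Finset.disjoint_empty_right _)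
      (fun v hvS => by
        have hvR : v ∈ R := (Set.Finite.mem_toFinset hSfin).mp hvS
        simpa using hdeg2s v hvR)
  exact hlinfree (containsLinForest_of_matching G s M hM1 hMe hMp)
end

section
/- Under the standing setup, with R = {v ∈ V(G) : x_v ≥ x_z/(2(h+1))}: any two non-adjacent vertices of R have the same neighborhood in G; consequently the subgraph of G induced by R is a complete multipartite graph. -/
open SimpleGraph Matrix

section Auxiliary

lemma adjMat_apply' {V : Type*} (G : SimpleGraph V) (a b : V) (h : G.Adj a b) :
    adjMat G a b = 1 := by simp [adjMat, h]

lemma adjMat_apply'' {V : Type*} (G : SimpleGraph V) (a b : V) (h : ¬ G.Adj a b) :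
    adjMat G a b = 0 := by simp [adjMat, h]

lemma adjMat_nonneg {V : Type*} (G : SimpleGraph V) (a b : V) : 0 ≤ adjMat G a b := by
  by_cases h : G.Adj a b
  · rw [adjMat_apply' G a b h]; norm_num
  · rw [adjMat_apply'' G a b h]

lemma adjMat_isHermitian {V : Type*} [Fintype V] (G : SimpleGraph V) :
    (adjMat G).IsHermitian := by
  classical
  ext i j
  simp only [conjTranspose_apply, star_trivial]
  by_cases h : G.Adj j i
  · rw [adjMat_apply' G j i h, adjMat_apply' G i j h.symm]
  · rw [adjMat_apply'' G j i h, adjMat_apply'' G i j (fun h' => h h'.symm)]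

lemma adjMat_isHermitian' {n : ℕ} (G : SimpleGraph (Fin n)) (A : Matrix (Fin n) (Fin n) ℝ)
    (hA : A = adjMat G) : A.IsHermitian := hA ▸ adjMat_isHermitian G

lemma herm_rayleigh {m : ℕ} (A : Matrix (Fin m) (Fin m) ℝ) (hA : A.IsHermitian) (y : Fin m → ℝ) :
    y ⬝ᵥ (A *ᵥ y) ≤ sSup (spectrum ℝ A) * (y ⬝ᵥ y) ∧
    (y ⬝ᵥ y = 1 → sSup (spectrum ℝ A) ≤ y ⬝ᵥ (A *ᵥ y) →
      A *ᵥ y = sSup (spectrum ℝ A) • y) := by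
  classical
  set μ := sSup (spectrum ℝ A) with hμ
  have hbdd : BddAbove (spectrum ℝ A) := (Matrix.finite_spectrum A).bddAbove
  have hle : ∀ i, hA.eigenvalues i ≤ μ := fun i => le_csSup hbdd (hA.eigenvalues_mem_spectrum_real i)
  set U : Matrix (Fin m) (Fin m) ℝ := (hA.eigenvectorUnitary : Matrix (Fin m) (Fin m) ℝ) with hUdef
  have hU1 : U * star U = 1 := Unitary.mul_star_self_of_mem (hA.eigenvectorUnitary).2
  set c : Fin m → ℝ := star U *ᵥ y with hc
  have hyc : U *ᵥ c = y := by rw [hc, mulVec_mulVec, hU1, one_mulVec]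
  have hdot : ∀ w : Fin m → ℝ, y ⬝ᵥ (U *ᵥ w) = c ⬝ᵥ w := by
    intro w
    rw [dotProduct_mulVec, hc]
    congr 1
    rw [Matrix.star_eq_conjTranspose, conjTranspose_eq_transpose_of_trivial, mulVec_transpose]
  have hcc : c ⬝ᵥ c = y ⬝ᵥ y := by
    conv_lhs => rw [← hdot c, hyc, dotProduct_comm]
  have hAy : A *ᵥ y = U *ᵥ (fun i => hA.eigenvalues i * c i) := by
    conv_lhs => rw [hA.spectral_theorem, Unitary.conjStarAlgAut_apply]
    rw [← mulVec_mulVec, ← mulVec_mulVec, ← hc]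
    congr 1
    funext i
    simp [mulVec, diagonal, dotProduct, hUdef]
  have hray : y ⬝ᵥ (A *ᵥ y) = ∑ i, hA.eigenvalues i * (c i)^2 := by
    rw [hAy, hdot]
    simp only [dotProduct, pow_two]
    exact Finset.sum_congr rfl fun i _ => by ring
  have hnorm : y ⬝ᵥ y = ∑ i, (c i)^2 := by
    rw [← hcc]; simp [dotProduct, pow_two]
  constructor
  · rw [hray, hnorm, Finset.mul_sum]
    apply Finset.sum_le_sum
    intro i _
    exact mul_le_mul_of_nonneg_right (hle i) (sq_nonneg _)
  · intro hy1 hge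
    have hsum1 : ∑ i, (c i)^2 = 1 := by rw [← hnorm, hy1]
    have hEq : ∑ i, (μ - hA.eigenvalues i) * (c i)^2 = 0 := by
      have h1 : ∑ i, (μ - hA.eigenvalues i) * (c i)^2 =
          μ * (∑ i, (c i)^2) - ∑ i, hA.eigenvalues i * (c i)^2 := by
        rw [Finset.mul_sum, ← Finset.sum_sub_distrib]; congr 1; funext i; ring
      have h2 : y ⬝ᵥ (A *ᵥ y) ≤ μ * (y ⬝ᵥ y) := by
        rw [hray, hnorm, Finset.mul_sum]
        exact Finset.sum_le_sum fun i _ => mul_le_mul_of_nonneg_right (hle i) (sq_nonneg _)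
      rw [hy1, mul_one] at h2
      have := le_antisymm h2 hge
      rw [h1, hsum1, mul_one, ← hray, this, sub_self]
    have hterm : ∀ i ∈ Finset.univ, (μ - hA.eigenvalues i) * (c i)^2 = 0 := by
      refine (Finset.sum_eq_zero_iff_of_nonneg ?_).1 hEq
      intro i _
      exact mul_nonneg (by linarith [hle i]) (sq_nonneg _)
    have hlc : ∀ i, hA.eigenvalues i * c i = μ * c i := by
      intro i
      rcases mul_eq_zero.1 (hterm i (Finset.mem_univ i)) with h | h
      · rw [show hA.eigenvalues i = μ by linarith]
      · rw [pow_eq_zero_iff (by norm_num)] at h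
        rw [h, mul_zero, mul_zero]
    rw [hAy]
    have : (fun i => hA.eigenvalues i * c i) = μ • c := by
      funext i; simp [hlc i]
    rw [this, mulVec_smul, hyc]

/-- Adding a pendant edge to an isolated vertex keeps a graph acyclic. -/
lemma acyclic_add_pendant {V : Type*} {F : SimpleGraph V} (hF : F.IsAcyclic)
    {v y : V} (hvy : v ≠ y) (hiso : ∀ w, ¬ F.Adj y w) :
    (F ⊔ fromEdgeSet {s(v, y)}).IsAcyclic := by
  classical
  set F' := F ⊔ fromEdgeSet {s(v, y)} with hF'
  intro w c hcyc
  have hadjy : ∀ b, F'.Adj y b → b = v := by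
    intro b hb
    rcases hb with hb | hb
    · exact absurd hb (hiso b)
    · rw [fromEdgeSet_adj] at hb
      have h1 := hb.1
      rw [Set.mem_singleton_iff, Sym2.eq_iff] at h1
      rcases h1 with ⟨h1, h2⟩ | ⟨h1, h2⟩
      · exact absurd h1.symm hvy
      · exact h2
  by_cases hy : s(v, y) ∈ c.edges
  · have hysup : y ∈ c.support := Walk.snd_mem_support_of_mem_edges c hy
    have hcyc' := hcyc.rotate hysup
    set c' := c.rotate y hysup with hc'
    clear_value c'
    cases hc : c' with
    | nil => rw [hc] at hcyc'; exact Walk.IsCycle.not_of_nil hcyc'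
    | cons hadj p =>
      rw [hc] at hcyc'
      rename_i b
      have hbv : b = v := hadjy b hadj
      rw [Walk.cons_isCycle_iff] at hcyc'
      obtain ⟨hp, hne⟩ := hcyc'
      have hpnil : ¬ p.reverse.Nil :=
        Walk.not_nil_of_ne (fun hyb => hvy (by rw [← hbv, ← hyb]))
      rw [Walk.not_nil_iff] at hpnil
      obtain ⟨d, hd, q, hq⟩ := hpnil
      have hdv : d = v := hadjy d hd
      apply hne
      have hmem : s(y, d) ∈ p.reverse.edges := by
        rw [hq, Walk.edges_cons]
        exact List.mem_cons_self
      rw [Walk.edges_reverse, List.mem_reverse] at hmem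
      rwa [hdv, ← hbv] at hmem
  · have hsub : ∀ e ∈ c.edges, e ∈ F.edgeSet := by
      intro e he
      have h2 := c.edges_subset_edgeSet he
      rw [hF', edgeSet_sup] at h2
      rcases h2 with h1 | h1
      · exact h1
      · exfalso
        rw [edgeSet_fromEdgeSet] at h1
        obtain ⟨h2, _⟩ := h1
        rw [Set.mem_singleton_iff] at h2
        exact hy (h2 ▸ he)
    exact hF (c.transfer F hsub) (hcyc.transfer hsub)

lemma support_ncard_le {n : ℕ} (H : SimpleGraph (Fin n)) :
    H.support.ncard ≤ 2 * H.edgeSet.ncard := by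
  classical
  have hsub : H.support.toFinset ⊆
      H.edgeSet.toFinset.biUnion (fun e => Finset.univ.filter (· ∈ e)) := by
    intro a ha
    rw [Set.mem_toFinset, SimpleGraph.mem_support] at ha
    obtain ⟨b, hb⟩ := ha
    rw [Finset.mem_biUnion]
    exact ⟨s(a, b), by rw [Set.mem_toFinset]; exact hb, by simp⟩
  have h1 := Finset.card_le_card hsub
  have h2 := Finset.card_biUnion_le (s := H.edgeSet.toFinset)
      (t := fun e => Finset.univ.filter (· ∈ e))
  have h3 : ∀ e ∈ H.edgeSet.toFinset, (Finset.univ.filter (· ∈ e)).card ≤ 2 := by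
    intro e _
    induction e using Sym2.ind with
    | _ a b =>
      have hss : (Finset.univ.filter (· ∈ s(a, b))) ⊆ {a, b} := by
        intro c hc
        rw [Finset.mem_filter] at hc
        have := hc.2
        rw [Sym2.mem_iff] at this
        simpa using this
      calc (Finset.univ.filter (· ∈ s(a, b))).card ≤ ({a, b} : Finset (Fin n)).card :=
            Finset.card_le_card hss
        _ ≤ 2 := Finset.card_le_two
  have h4 : (H.edgeSet.toFinset.biUnion (fun e => Finset.univ.filter (· ∈ e))).card
      ≤ 2 * H.edgeSet.toFinset.card := by
    calc _ ≤ ∑ e ∈ H.edgeSet.toFinset, (Finset.univ.filter (· ∈ e)).card := h2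
    _ ≤ ∑ e ∈ H.edgeSet.toFinset, 2 := Finset.sum_le_sum h3
    _ = 2 * H.edgeSet.toFinset.card := by rw [Finset.sum_const, smul_eq_mul, mul_comm]
  rw [Set.ncard_eq_toFinset_card', Set.ncard_eq_toFinset_card']
  exact le_trans h1 h4

/-- A single pendant-edge addition step. -/
lemma pendant_step {n : ℕ} {G F : SimpleGraph (Fin n)} {v y : Fin n}
    (hFG : F ≤ G) (hacyc : F.IsAcyclic) (hdeg : ∀ w, {t | F.Adj w t}.ncard ≤ 2)
    (hdegv : {t | F.Adj v t}.ncard ≤ 1)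
    (hiso : ∀ w, ¬ F.Adj y w) (hGvy : G.Adj v y) :
    (F ⊔ fromEdgeSet {s(v, y)}) ≤ G ∧ (F ⊔ fromEdgeSet {s(v, y)}).IsAcyclic ∧
    (∀ w, {t | (F ⊔ fromEdgeSet {s(v, y)}).Adj w t}.ncard ≤ 2) ∧
    (F ⊔ fromEdgeSet {s(v, y)}).edgeSet = insert s(v, y) F.edgeSet ∧
    s(v, y) ∉ F.edgeSet ∧
    {t | (F ⊔ fromEdgeSet {s(v, y)}).Adj v t}.ncard ≤ 2 := by
  classical
  have hvy : v ≠ y := G.ne_of_adj hGvy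
  have hadj : ∀ a b : Fin n, (F ⊔ fromEdgeSet {s(v, y)}).Adj a b ↔
      F.Adj a b ∨ ((a = v ∧ b = y) ∨ (a = y ∧ b = v)) := by
    intro a b
    rw [sup_adj, fromEdgeSet_adj, Set.mem_singleton_iff, Sym2.eq_iff]
    constructor
    · rintro (h | ⟨h, _⟩)
      exacts [Or.inl h, Or.inr h]
    · rintro (h | h)
      · exact Or.inl h
      · refine Or.inr ⟨h, ?_⟩
        rcases h with ⟨h1, h2⟩ | ⟨h1, h2⟩ <;> rw [h1, h2]
        exacts [hvy, hvy.symm]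
  refine ⟨?_, acyclic_add_pendant hacyc hvy hiso, ?_, ?_, ?_, ?_⟩
  · intro a b hab
    rw [hadj] at hab
    rcases hab with h | (⟨h1, h2⟩ | ⟨h1, h2⟩)
    · exact hFG h
    · rw [h1, h2]; exact hGvy
    · rw [h1, h2]; exact hGvy.symm
  · intro w
    by_cases hwv : w = v
    · subst hwv
      have hss : {t | (F ⊔ fromEdgeSet {s(w, y)}).Adj w t} ⊆ insert y {t | F.Adj w t} := by
        intro t ht
        rw [Set.mem_setOf_eq, hadj] at ht
        rcases ht with h | (⟨h1, h2⟩ | ⟨h1, h2⟩)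
        · exact Set.mem_insert_of_mem _ h
        · rw [h2]; exact Set.mem_insert _ _
        · exact absurd h1 hvy
      calc {t | (F ⊔ fromEdgeSet {s(w, y)}).Adj w t}.ncard
          ≤ (insert y {t | F.Adj w t}).ncard := Set.ncard_le_ncard hss (Set.toFinite _)
        _ ≤ {t | F.Adj w t}.ncard + 1 := Set.ncard_insert_le _ _
        _ ≤ 2 := by omega
    · by_cases hwy : w = y
      · subst hwy
        have hss : {t | (F ⊔ fromEdgeSet {s(v, w)}).Adj w t} ⊆ {v} := by
          intro t ht
          rw [Set.mem_setOf_eq, hadj] at ht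
          rcases ht with h | (⟨h1, h2⟩ | ⟨h1, h2⟩)
          · exact absurd h (hiso t)
          · exact absurd h1 hwv
          · rw [h2]; rfl
        calc _ ≤ ({v} : Set (Fin n)).ncard := Set.ncard_le_ncard hss (Set.toFinite _)
          _ ≤ 2 := by rw [Set.ncard_singleton]; omega
      · have hss : {t | (F ⊔ fromEdgeSet {s(v, y)}).Adj w t} ⊆ {t | F.Adj w t} := by
          intro t ht
          rw [Set.mem_setOf_eq, hadj] at ht
          rcases ht with h | (⟨h1, h2⟩ | ⟨h1, h2⟩)
          · exact h
          · exact absurd h1 hwv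
          · exact absurd h1 hwy
        exact le_trans (Set.ncard_le_ncard hss (Set.toFinite _)) (hdeg w)
  · rw [edgeSet_sup, edgeSet_fromEdgeSet]
    have hdiag : ({s(v, y)} : Set (Sym2 (Fin n))) \ {e | e.IsDiag} = {s(v, y)} := by
      ext e
      simp only [Set.mem_diff, Set.mem_singleton_iff, Set.mem_setOf_eq, and_iff_left_iff_imp]
      rintro rfl
      simp [hvy]
    rw [show Sym2.diagSet = {e : Sym2 (Fin n) | e.IsDiag} from rfl, hdiag, Set.union_singleton]
  · rw [mem_edgeSet]
    intro hF'
    exact hiso v hF'.symm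
  · have hss : {t | (F ⊔ fromEdgeSet {s(v, y)}).Adj v t} ⊆ insert y {t | F.Adj v t} := by
      intro t ht
      rw [Set.mem_setOf_eq, hadj] at ht
      rcases ht with h | (⟨h1, h2⟩ | ⟨h1, h2⟩)
      · exact Set.mem_insert_of_mem _ h
      · rw [h2]; exact Set.mem_insert _ _
      · exact absurd h1 hvy
    calc {t | (F ⊔ fromEdgeSet {s(v, y)}).Adj v t}.ncard
        ≤ (insert y {t | F.Adj v t}).ncard := Set.ncard_le_ncard hss (Set.toFinite _)
      _ ≤ {t | F.Adj v t}.ncard + 1 := Set.ncard_insert_le _ _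
      _ ≤ 2 := by omega

/-- The graph obtained from `G` by replacing the neighborhood of `v` by `N_G(u)`. -/
def swapG {V : Type*} (G : SimpleGraph V) (u v : V) : SimpleGraph V where
  Adj a b := (a ≠ v ∧ b ≠ v ∧ G.Adj a b) ∨ (a = v ∧ b ≠ v ∧ G.Adj u b) ∨
    (b = v ∧ a ≠ v ∧ G.Adj u a)
  symm := by
    constructor
    intro a b hab
    rcases hab with ⟨h1, h2, h3⟩ | ⟨h1, h2, h3⟩ | ⟨h1, h2, h3⟩
    · exact Or.inl ⟨h2, h1, h3.symm⟩
    · exact Or.inr (Or.inr ⟨h1, h2, h3⟩)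
    · exact Or.inr (Or.inl ⟨h1, h2, h3⟩)
  loopless := by
    constructor
    intro a ha
    rcases ha with ⟨h1, h2, h3⟩ | ⟨h1, h2, h3⟩ | ⟨h1, h2, h3⟩
    · exact G.loopless.irrefl a h3
    · exact h2 h1
    · exact h2 h1

lemma swapG_not_containsLinForest {n s : ℕ} (G : SimpleGraph (Fin n)) (u v : Fin n)
    (hs3 : 3 ≤ s) (hdeg : 2 * s + 2 ≤ {w | G.Adj v w}.ncard)
    (hfree : ¬ ContainsLinForest G s) : ¬ ContainsLinForest (swapG G u v) s := by
  classical
  rintro ⟨H, hle, ⟨hacyc, hdegH⟩, hcard⟩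
  apply hfree
  set d := {w | H.Adj v w}.ncard with hd
  have hd2 : d ≤ 2 := hdegH v
  have hdiff : 2 ≤ ({w | G.Adj v w} \ H.support).ncard := by
    have hsub : {w | G.Adj v w} ⊆ ({w | G.Adj v w} \ H.support) ∪ H.support := by
      intro a ha
      by_cases h : a ∈ H.support
      · exact Or.inr h
      · exact Or.inl ⟨ha, h⟩
    have h1 : {w | G.Adj v w}.ncard ≤ ({w | G.Adj v w} \ H.support).ncard + H.support.ncard :=
      le_trans (Set.ncard_le_ncard hsub (Set.toFinite _)) (Set.ncard_union_le _ _)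
    have h2 := support_ncard_le H
    rw [hcard] at h2
    omega
  obtain ⟨y₁, y₂, hy₁, hy₂, hyne⟩ := (Set.one_lt_ncard_iff (Set.toFinite _)).1
    (show 1 < ({w | G.Adj v w} \ H.support).ncard by omega)
  obtain ⟨hGy₁, hs₁⟩ := hy₁
  obtain ⟨hGy₂, hs₂⟩ := hy₂
  rw [Set.mem_setOf_eq] at hGy₁ hGy₂
  have hiso₁ : ∀ w, ¬ H.Adj y₁ w := by
    intro w hw; exact hs₁ (H.mem_support.2 ⟨w, hw⟩)
  have hiso₂ : ∀ w, ¬ H.Adj y₂ w := by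
    intro w hw; exact hs₂ (H.mem_support.2 ⟨w, hw⟩)
  set F₀ : SimpleGraph (Fin n) :=
    { Adj := fun a b => H.Adj a b ∧ a ≠ v ∧ b ≠ v
      symm := ⟨fun a b ⟨h1, h2, h3⟩ => ⟨h1.symm, h3, h2⟩⟩
      loopless := ⟨fun a ha => H.loopless.irrefl a ha.1⟩ } with hF₀
  have hF₀H : F₀ ≤ H := fun a b hab => hab.1
  have hF₀G : F₀ ≤ G := by
    intro a b hab
    obtain ⟨h1, h2, h3⟩ := hab
    rcases hle h1 with ⟨_, _, h⟩ | ⟨h, _, _⟩ | ⟨h, _, _⟩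
    · exact h
    · exact absurd h h2
    · exact absurd h h3
  have hF₀acyc : F₀.IsAcyclic := by
    intro w c hc
    exact hacyc (c.transfer H (fun e he => edgeSet_mono hF₀H (c.edges_subset_edgeSet he)))
      (hc.transfer _)
  have hF₀deg : ∀ w, {t | F₀.Adj w t}.ncard ≤ 2 := by
    intro w
    refine le_trans (Set.ncard_le_ncard ?_ (Set.toFinite _)) (hdegH w)
    intro t ht; exact ht.1
  have hF₀v : ∀ t, ¬ F₀.Adj v t := fun t ht => ht.2.1 rfl
  have hF₀viso : {t | F₀.Adj v t} = ∅ := by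
    ext t; simp only [Set.mem_setOf_eq, Set.mem_empty_iff_false, iff_false]; exact hF₀v t
  have hF₀y₁ : ∀ w, ¬ F₀.Adj y₁ w := fun w hw => hiso₁ w hw.1
  have hF₀y₂ : ∀ w, ¬ F₀.Adj y₂ w := fun w hw => hiso₂ w hw.1
  have hE₀ : F₀.edgeSet = H.edgeSet \ H.incidenceSet v := by
    ext e
    induction e using Sym2.ind with
    | _ a b =>
      simp only [mem_edgeSet, Set.mem_diff, SimpleGraph.incidenceSet, Set.mem_setOf_eq,
        mem_edgeSet, Sym2.mem_iff]
      constructor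
      · rintro ⟨h1, h2, h3⟩
        exact ⟨h1, fun hc => by rcases hc.2 with h | h; exact h2 h.symm; exact h3 h.symm⟩
      · rintro ⟨h1, h2⟩
        refine ⟨h1, ?_, ?_⟩
        · intro hc; exact h2 ⟨h1, Or.inl hc.symm⟩
        · intro hc; exact h2 ⟨h1, Or.inr hc.symm⟩
  have hinc : (H.incidenceSet v).ncard = d := by
    rw [hd, ← Nat.card_coe_set_eq, ← Nat.card_coe_set_eq]
    exact Nat.card_congr (H.incidenceSetEquivNeighborSet v)
  have hcard₀ : F₀.edgeSet.ncard = s - d := by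
    rw [hE₀, Set.ncard_diff (H.incidenceSet_subset v) (Set.toFinite _), hinc, hcard]
  have hvy₁ : v ≠ y₁ := G.ne_of_adj hGy₁
  have hvy₂ : v ≠ y₂ := G.ne_of_adj hGy₂
  rcases show d = 0 ∨ d = 1 ∨ d = 2 by omega with h0 | h1 | h2
  · exact ⟨F₀, hF₀G, ⟨hF₀acyc, hF₀deg⟩, by rw [hcard₀]; omega⟩
  · obtain ⟨hle', hacyc', hdeg', hE', hnotmem', _⟩ :=
      pendant_step hF₀G hF₀acyc hF₀deg (by rw [hF₀viso]; simp) hF₀y₁ hGy₁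
    refine ⟨_, hle', ⟨hacyc', hdeg'⟩, ?_⟩
    rw [hE', Set.ncard_insert_of_notMem hnotmem' (Set.toFinite _), hcard₀]
    omega
  · obtain ⟨hle', hacyc', hdeg', hE', hnotmem', hdegv'⟩ :=
      pendant_step hF₀G hF₀acyc hF₀deg (by rw [hF₀viso]; simp) hF₀y₁ hGy₁
    set F₁ := F₀ ⊔ fromEdgeSet {s(v, y₁)} with hF₁
    have hdegv₁ : {t | F₁.Adj v t}.ncard ≤ 1 := by
      have hsub : {t | F₁.Adj v t} ⊆ {y₁} := by
        intro t ht
        rcases ht with ht | ht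
        · exact absurd ht (hF₀v t)
        · rw [fromEdgeSet_adj, Set.mem_singleton_iff, Sym2.eq_iff] at ht
          rcases ht.1 with ⟨_, h⟩ | ⟨h, _⟩
          · rw [h]; rfl
          · exact absurd h hvy₁
      exact le_trans (Set.ncard_le_ncard hsub (Set.toFinite _)) (by simp)
    have hy₂iso : ∀ w, ¬ F₁.Adj y₂ w := by
      intro w hw
      rcases hw with hw | hw
      · exact hF₀y₂ w hw
      · rw [fromEdgeSet_adj, Set.mem_singleton_iff, Sym2.eq_iff] at hw
        rcases hw.1 with ⟨h, _⟩ | ⟨h, _⟩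
        · exact hvy₂ h.symm
        · exact hyne h.symm
    obtain ⟨hle'', hacyc'', hdeg'', hE'', hnotmem'', _⟩ :=
      pendant_step hle' hacyc' hdeg' hdegv₁ hy₂iso hGy₂
    refine ⟨_, hle'', ⟨hacyc'', hdeg''⟩, ?_⟩
    rw [hE'', Set.ncard_insert_of_notMem hnotmem'' (Set.toFinite _), hE',
      Set.ncard_insert_of_notMem hnotmem' (Set.toFinite _), hcard₀]
    omega

lemma swapG_cliqueFree {V : Type*} [DecidableEq V] (G : SimpleGraph V) (u v : V) (m : ℕ)
    (hne : u ≠ v) (hnadj : ¬ G.Adj u v) (hfree : G.CliqueFree m) :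
    (swapG G u v).CliqueFree m := by
  intro t ht
  obtain ⟨hclique, hcard⟩ := ht
  have huv' : ¬ (swapG G u v).Adj u v := by
    rintro (⟨_, h2, _⟩ | ⟨h1, h2, _⟩ | ⟨_, _, h3⟩)
    · exact h2 rfl
    · exact h2 rfl
    · exact G.loopless.irrefl u h3
  by_cases hv : v ∈ t
  · have hu : u ∉ t := by
      intro hu
      exact huv' (hclique hu hv hne)
    refine hfree (insert u (t.erase v)) ⟨?_, ?_⟩
    · intro a ha b hb hab
      simp only [Finset.coe_insert, Set.mem_insert_iff, Finset.coe_erase, Set.mem_diff,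
        Finset.mem_coe, Set.mem_singleton_iff] at ha hb
      have key : ∀ c, c ∈ t → c ≠ v → G.Adj u c := by
        intro c hc hcv
        have := hclique hv hc (fun h => hcv h.symm)
        rcases this with ⟨h1, _, _⟩ | ⟨_, _, h3⟩ | ⟨h1, _, _⟩
        · exact absurd rfl h1
        · exact h3
        · exact absurd h1 hcv
      rcases ha with rfl | ⟨hat, hav⟩
      · rcases hb with rfl | ⟨hbt, hbv⟩
        · exact absurd rfl hab
        · exact key b hbt hbv
      · rcases hb with rfl | ⟨hbt, hbv⟩
        · exact (key a hat hav).symm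
        · have := hclique hat hbt hab
          rcases this with ⟨_, _, h3⟩ | ⟨h1, _, _⟩ | ⟨h1, _, _⟩
          · exact h3
          · exact absurd h1 hav
          · exact absurd h1 hbv
    · rw [Finset.card_insert_of_notMem (fun h => hu (Finset.mem_of_mem_erase h)),
        Finset.card_erase_of_mem hv, hcard]
      have : 1 ≤ m := by
        rw [← hcard]
        exact Finset.card_pos.2 ⟨v, hv⟩
      omega
  · refine hfree t ⟨?_, hcard⟩
    intro a ha b hb hab
    have := hclique ha hb hab
    rcases this with ⟨_, _, h3⟩ | ⟨h1, _, _⟩ | ⟨h1, _, _⟩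
    · exact h3
    · exact absurd (h1 ▸ ha) hv
    · exact absurd (h1 ▸ hb) hv

lemma star_specRad_ge {n : ℕ} (z : Fin n) (t : ℝ) (ht : 0 < t) (htn : t ^ 2 ≤ (n : ℝ) - 1) :
    t ≤ specRad (SimpleGraph.fromRel (fun a (_ : Fin n) => a = z)) := by
  classical
  set S := SimpleGraph.fromRel (fun a (_ : Fin n) => a = z) with hS
  set A := adjMat S with hA
  have hn1 : (0 : ℝ) < (n : ℝ) - 1 := lt_of_lt_of_le (pow_pos ht 2) htn
  have hn : 2 ≤ n := by
    by_contra hc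
    push_neg at hc
    have : (n : ℝ) ≤ 1 := by exact_mod_cast Nat.lt_succ_iff.mp hc
    linarith
  set y : Fin n → ℝ := fun w => if w = z then t else 1 with hy
  have hadjS : ∀ a b, S.Adj a b ↔ a ≠ b ∧ (a = z ∨ b = z) := by
    intro a b; rw [hS, fromRel_adj]
  have hAzb : ∀ b, A z b = if b = z then 0 else 1 := by
    intro b
    by_cases hb : b = z
    · rw [if_pos hb, hA, adjMat_apply'' _ _ _ (by rw [hadjS]; rintro ⟨h1, _⟩; exact h1 hb.symm)]
    · rw [if_neg hb, hA, adjMat_apply' _ _ _ (by rw [hadjS]; exact ⟨fun h => hb h.symm, Or.inl rfl⟩)]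
  have hAab : ∀ a, a ≠ z → ∀ b, A a b = if b = z then 1 else 0 := by
    intro a ha b
    by_cases hb : b = z
    · rw [if_pos hb, hA, adjMat_apply' _ _ _ (by rw [hadjS]; exact ⟨fun h => ha (h.trans hb), Or.inr hb⟩)]
    · rw [if_neg hb, hA, adjMat_apply'' _ _ _ (by rw [hadjS]; rintro ⟨_, h | h⟩; exacts [ha h, hb h])]
  have hone : ∑ b : Fin n, (if b = z then (1:ℝ) else 0) = 1 := by
    simp
  have hsum0 : ∑ b : Fin n, (if b = z then (0:ℝ) else 1) = (n : ℝ) - 1 := by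
    have h1 : ∀ b : Fin n, (if b = z then (0:ℝ) else 1) = 1 - (if b = z then (1:ℝ) else 0) := by
      intro b; by_cases hb : b = z <;> simp [hb]
    rw [Finset.sum_congr rfl (fun b _ => h1 b), Finset.sum_sub_distrib, hone]
    simp
  have hmv : ∀ a, (A *ᵥ y) a = if a = z then (n : ℝ) - 1 else t := by
    intro a
    by_cases haz : a = z
    · subst haz
      rw [if_pos rfl]
      calc (A *ᵥ y) a = ∑ b, A a b * y b := rfl
        _ = ∑ b : Fin n, (if b = a then (0:ℝ) else 1) := by
            apply Finset.sum_congr rfl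
            intro b _
            rw [hAzb b]
            by_cases hb : b = a <;> simp [hb, hy]
        _ = (n : ℝ) - 1 := hsum0
    · rw [if_neg haz]
      calc (A *ᵥ y) a = ∑ b, A a b * y b := rfl
        _ = ∑ b : Fin n, (if b = z then t else 0) := by
            apply Finset.sum_congr rfl
            intro b _
            rw [hAab a haz b]
            by_cases hb : b = z <;> simp [hb, hy]
        _ = t := by simp
  have hray : y ⬝ᵥ (A *ᵥ y) = 2 * t * ((n : ℝ) - 1) := by
    calc y ⬝ᵥ (A *ᵥ y) = ∑ a, y a * (A *ᵥ y) a := rfl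
      _ = ∑ a : Fin n, (if a = z then t * ((n:ℝ) - 1) else t) := by
          apply Finset.sum_congr rfl
          intro a _
          rw [hmv a]
          by_cases ha : a = z <;> simp [ha, hy]
      _ = ∑ a : Fin n, ((if a = z then t * ((n:ℝ) - 1) - t else 0) + t) := by
          apply Finset.sum_congr rfl
          intro a _
          by_cases ha : a = z <;> simp [ha]
      _ = (t * ((n:ℝ) - 1) - t) + (n : ℝ) * t := by
          rw [Finset.sum_add_distrib]
          simp [Finset.card_univ, mul_comm]
      _ = 2 * t * ((n : ℝ) - 1) := by ring
  have hnorm : y ⬝ᵥ y = t ^ 2 + ((n : ℝ) - 1) := by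
    calc y ⬝ᵥ y = ∑ a, y a * y a := rfl
      _ = ∑ a : Fin n, ((if a = z then t * t - 1 else 0) + 1) := by
          apply Finset.sum_congr rfl
          intro a _
          by_cases ha : a = z <;> simp [ha, hy]
      _ = (t * t - 1) + (n : ℝ) := by
          rw [Finset.sum_add_distrib]
          simp [Finset.card_univ]
      _ = t ^ 2 + ((n : ℝ) - 1) := by ring
  have hherm := (herm_rayleigh A (adjMat_isHermitian S) y).1
  rw [hray, hnorm] at hherm
  have hpos : 0 < t ^ 2 + ((n : ℝ) - 1) := by positivity
  rw [show specRad S = sSup (spectrum ℝ A) from rfl]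
  nlinarith [hherm, htn, ht, hn1]

lemma star_cliqueFree {n : ℕ} (z : Fin n) (m : ℕ) (hm : 3 ≤ m) :
    (SimpleGraph.fromRel (fun a (_ : Fin n) => a = z)).CliqueFree m := by
  have h3 : (SimpleGraph.fromRel (fun a (_ : Fin n) => a = z)).CliqueFree 3 := by
    intro t ht
    obtain ⟨hclique, hcard⟩ := ht
    obtain ⟨a, b, c, hab, hac, hbc, rfl⟩ := Finset.card_eq_three.1 hcard
    have h1 := hclique (by simp) (by simp : (b:Fin n) ∈ _) hab
    have h2 := hclique (by simp) (by simp : (c:Fin n) ∈ _) hac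
    have h3 := hclique (by simp : (b:Fin n) ∈ _) (by simp : (c:Fin n) ∈ _) hbc
    rw [fromRel_adj] at h1 h2 h3
    rcases h1.2 with h | h <;> rcases h2.2 with h' | h' <;> rcases h3.2 with h'' | h'' <;>
      subst_vars <;> simp_all
  exact h3.mono hm

lemma star_linfree {n s : ℕ} (z : Fin n) (hs3 : 3 ≤ s) :
    ¬ ContainsLinForest (SimpleGraph.fromRel (fun a (_ : Fin n) => a = z)) s := by
  rintro ⟨H, hle, ⟨_, hdeg⟩, hcard⟩
  have hsub : H.edgeSet ⊆ (fun w => s(z, w)) '' {w | H.Adj z w} := by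
    intro e he
    induction e using Sym2.ind with
    | _ a b =>
      rw [mem_edgeSet] at he
      have := hle he
      rw [fromRel_adj] at this
      rcases this.2 with h | h
      · subst h
        exact ⟨b, he, rfl⟩
      · subst h
        exact ⟨a, he.symm, Sym2.eq_swap⟩
  have h1 : H.edgeSet.ncard ≤ 2 := by
    calc H.edgeSet.ncard ≤ ((fun w => s(z, w)) '' {w | H.Adj z w}).ncard :=
          Set.ncard_le_ncard hsub (Set.toFinite _)
      _ ≤ {w | H.Adj z w}.ncard := Set.ncard_image_le (Set.toFinite _)
      _ ≤ 2 := hdeg z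
  omega

end Auxiliary

/-- Under the standing setup, with `R = {v : x_v ≥ x_z/(2(h+1))}`: any two non-adjacent
vertices of `R` have the same neighborhood in `G`, and consequently `G[R]` is a complete
multipartite graph (non-adjacency in `G[R]` is transitive). -/
theorem R_induces_complete_multipartite
    (k s n : ℕ) (hk : 2 ≤ k) (hs : 3 ≤ s)
    (h : ℕ) (hh : h = (s - 1) / 2) (α : ℝ) (hα : α = 1 / (36 * ((h : ℝ) + 1) ^ 3))
    (hn : 28 * ((h : ℝ) + 1) ^ 2 / α ^ 2 ≤ (n : ℝ))
    (G : SimpleGraph (Fin n)) (hG : IsExtremal n k s G)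
    (x : Fin n → ℝ) (hxpos : ∀ v, 0 < x v) (hxnorm : ∑ v, x v ^ 2 = 1)
    (heig : adjMat G *ᵥ x = specRad G • x)
    (z : Fin n) (hz : ∀ v, x v ≤ x z) :
    (∀ u v : Fin n, u ∈ {v : Fin n | x z / (2 * ((h : ℝ) + 1)) ≤ x v} →
        v ∈ {v : Fin n | x z / (2 * ((h : ℝ) + 1)) ≤ x v} →
        u ≠ v → ¬ G.Adj u v → {w | G.Adj u w} = {w | G.Adj v w}) ∧
    (∀ a b c : {v : Fin n | x z / (2 * ((h : ℝ) + 1)) ≤ x v},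
        ¬ (G.induce {v : Fin n | x z / (2 * ((h : ℝ) + 1)) ≤ x v}).Adj a b →
        ¬ (G.induce {v : Fin n | x z / (2 * ((h : ℝ) + 1)) ≤ x v}).Adj b c →
        ¬ (G.induce {v : Fin n | x z / (2 * ((h : ℝ) + 1)) ≤ x v}).Adj a c) := by
  classical
  set R : Set (Fin n) := {v : Fin n | x z / (2 * ((h : ℝ) + 1)) ≤ x v} with hR
  set ρ : ℝ := specRad G with hρ
  set A : Matrix (Fin n) (Fin n) ℝ := adjMat G with hAdef
  have hH1 : (1 : ℝ) ≤ (h : ℝ) + 1 := by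
    have : (0:ℝ) ≤ (h:ℝ) := Nat.cast_nonneg h
    linarith
  have hxz : 0 < x z := hxpos z
  -- s ≤ 2h + 2
  have hs2h : s ≤ 2 * h + 2 := by omega
  have hs2hR : (s : ℝ) ≤ 2 * (h : ℝ) + 2 := by exact_mod_cast hs2h
  -- n is large
  have hnn : 36288 * ((h : ℝ) + 1) ^ 8 ≤ (n : ℝ) := by
    have hα0 : (36 : ℝ) * ((h : ℝ) + 1) ^ 3 ≠ 0 := by positivity
    have heq : 28 * ((h : ℝ) + 1) ^ 2 / α ^ 2 = 36288 * ((h : ℝ) + 1) ^ 8 := by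
      rw [hα]
      field_simp
      ring
    rw [heq] at hn
    exact hn
  -- the test value
  set t : ℝ := 2 * ((h : ℝ) + 1) * (2 * (s : ℝ) + 2) with ht
  have htpos : 0 < t := by
    have : (0:ℝ) < 2 * (s:ℝ) + 2 := by positivity
    positivity
  have htn : t ^ 2 ≤ (n : ℝ) - 1 := by
    have h1 : t ≤ 12 * ((h : ℝ) + 1) ^ 2 := by nlinarith
    have h2 : t ^ 2 ≤ 144 * ((h : ℝ) + 1) ^ 4 := by nlinarith
    have h3 : ((h : ℝ) + 1) ^ 4 ≤ ((h : ℝ) + 1) ^ 8 := by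
      apply pow_le_pow_right₀ hH1
      omega
    nlinarith
  -- lower bound on the spectral radius
  have hρt : t ≤ ρ := by
    have hfeas1 := star_cliqueFree z (k + 1) (by omega)
    have hfeas2 := star_linfree z hs
    have := hG.2.2 _ hfeas1 hfeas2
    exact le_trans (star_specRad_ge z t htpos htn) this
  have hρpos : 0 < ρ := lt_of_lt_of_le htpos hρt
  -- eigen-equation coordinates
  have hAx : ∀ w, ∑ b, A w b * x b = ρ * x w := by
    intro w
    have := congrFun heig w
    simpa [Matrix.mulVec, dotProduct] using this
  -- row sums count neighbours
  have hAsum : ∀ w : Fin n, ∑ b, A w b = ({a | G.Adj w a}.ncard : ℝ) := by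
    intro w
    have h1 : {a | G.Adj w a}.ncard = (Finset.univ.filter (fun a => G.Adj w a)).card := by
      rw [← Set.ncard_coe_finset]
      congr 1
      ext a
      simp
    rw [h1, ← Finset.sum_boole]
    apply Finset.sum_congr rfl
    intro b _
    by_cases hb : G.Adj w b
    · have e1 : A w b = 1 := adjMat_apply' G w b hb
      rw [e1, if_pos hb]
    · have e1 : A w b = 0 := adjMat_apply'' G w b hb
      rw [e1, if_neg hb]
  -- degrees of vertices in R are large
  have hdegR : ∀ v ∈ R, 2 * s + 2 ≤ {w | G.Adj v w}.ncard := by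
    intro v hv
    have hxv : x z / (2 * ((h : ℝ) + 1)) ≤ x v := hv
    have h1 : ρ * x v ≤ ({w | G.Adj v w}.ncard : ℝ) * x z := by
      calc ρ * x v = ∑ b, A v b * x b := (hAx v).symm
        _ ≤ ∑ b, A v b * x z := by
            apply Finset.sum_le_sum
            intro b _
            exact mul_le_mul_of_nonneg_left (hz b) (adjMat_nonneg G v b)
        _ = (∑ b, A v b) * x z := by rw [Finset.sum_mul]
        _ = ({w | G.Adj v w}.ncard : ℝ) * x z := by rw [hAsum]
    have h2 : t * (x z / (2 * ((h : ℝ) + 1))) ≤ ρ * x v := by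
      apply mul_le_mul hρt hxv (by positivity) (le_of_lt hρpos)
    have h3 : t * (x z / (2 * ((h : ℝ) + 1))) = (2 * (s:ℝ) + 2) * x z := by
      rw [ht]
      field_simp
    have h4 : (2 * (s:ℝ) + 2) * x z ≤ ({w | G.Adj v w}.ncard : ℝ) * x z := by
      rw [← h3]; linarith
    have h5 : (2 * (s:ℝ) + 2) ≤ ({w | G.Adj v w}.ncard : ℝ) :=
      le_of_mul_le_mul_right (by linarith [h4]) hxz
    exact_mod_cast h5
  have hx2 : x ⬝ᵥ x = 1 := by
    rw [← hxnorm]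
    apply Finset.sum_congr rfl
    intro a _
    rw [pow_two]
  -- the key claim
  have key : ∀ u v : Fin n, u ∈ R → v ∈ R → u ≠ v → ¬ G.Adj u v → x v ≤ x u →
      {w | G.Adj u w} = {w | G.Adj v w} := by
    intro u v hu hv hne hnadj hle2
    set G' := swapG G u v with hG'
    set A' : Matrix (Fin n) (Fin n) ℝ := adjMat G' with hA'def
    have hG'free1 : G'.CliqueFree (k + 1) := swapG_cliqueFree G u v (k + 1) hne hnadj hG.1
    have hG'free2 : ¬ ContainsLinForest G' s :=
      swapG_not_containsLinForest G u v hs (hdegR v hv) hG.2.1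
    have hspec : specRad G' ≤ ρ := hG.2.2 G' hG'free1 hG'free2
    -- entries of A'
    have hA'vb : ∀ b, A' v b = A u b := by
      intro b
      by_cases hb : b = v
      · subst hb
        rw [hA'def, adjMat_apply'' _ _ _ (G'.loopless.irrefl b), hAdef, adjMat_apply'' _ _ _ hnadj]
      · have hiff : G'.Adj v b ↔ G.Adj u b := by
          constructor
          · rintro (⟨h1, _, _⟩ | ⟨_, _, h3⟩ | ⟨h1, _, _⟩)
            · exact absurd rfl h1
            · exact h3
            · exact absurd h1 hb
          · intro hgb
            exact Or.inr (Or.inl ⟨rfl, hb, hgb⟩)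
        by_cases hub : G.Adj u b
        · rw [hA'def, adjMat_apply' _ _ _ (hiff.2 hub), hAdef, adjMat_apply' _ _ _ hub]
        · rw [hA'def, adjMat_apply'' _ _ _ (fun hc => hub (hiff.1 hc)), hAdef,
            adjMat_apply'' _ _ _ hub]
    have hA'av : ∀ a, a ≠ v → A' a v = A u a := by
      intro a ha
      have hiff : G'.Adj a v ↔ G.Adj u a := by
        constructor
        · rintro (⟨_, h2, _⟩ | ⟨h1, _, _⟩ | ⟨_, _, h3⟩)
          · exact absurd rfl h2
          · exact absurd h1 ha
          · exact h3
        · intro hga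
          exact Or.inr (Or.inr ⟨rfl, ha, hga⟩)
      by_cases hua : G.Adj u a
      · rw [hA'def, adjMat_apply' _ _ _ (hiff.2 hua), hAdef, adjMat_apply' _ _ _ hua]
      · rw [hA'def, adjMat_apply'' _ _ _ (fun hc => hua (hiff.1 hc)), hAdef,
          adjMat_apply'' _ _ _ hua]
    have hA'ab : ∀ a, a ≠ v → ∀ b, b ≠ v → A' a b = A a b := by
      intro a ha b hb
      have hiff : G'.Adj a b ↔ G.Adj a b := by
        constructor
        · rintro (⟨_, _, h3⟩ | ⟨h1, _, _⟩ | ⟨h1, _, _⟩)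
          · exact h3
          · exact absurd h1 ha
          · exact absurd h1 hb
        · intro hab
          exact Or.inl ⟨ha, hb, hab⟩
      by_cases hab : G.Adj a b
      · rw [hA'def, adjMat_apply' _ _ _ (hiff.2 hab), hAdef, adjMat_apply' _ _ _ hab]
      · rw [hA'def, adjMat_apply'' _ _ _ (fun hc => hab (hiff.1 hc)), hAdef,
          adjMat_apply'' _ _ _ hab]
    -- symmetric entries
    have hsymA : ∀ a b, A a b = A b a := by
      intro a b
      by_cases hab : G.Adj a b
      · rw [hAdef, adjMat_apply' _ _ _ hab, adjMat_apply' _ _ _ hab.symm]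
      · rw [hAdef, adjMat_apply'' _ _ _ hab, adjMat_apply'' _ _ _ (fun hc => hab hc.symm)]
    have hAvv : A v v = 0 := adjMat_apply'' _ _ _ (G.loopless.irrefl v)
    have hAuv : A u v = 0 := adjMat_apply'' _ _ _ hnadj
    -- mulVec coordinates of A'
    have hmv_v : (A' *ᵥ x) v = ρ * x u := by
      calc (A' *ᵥ x) v = ∑ b, A' v b * x b := rfl
        _ = ∑ b, A u b * x b := by
            apply Finset.sum_congr rfl
            intro b _
            rw [hA'vb b]
        _ = ρ * x u := hAx u
    have hmv_a : ∀ a, a ≠ v → (A' *ᵥ x) a = ρ * x a + (A u a - A v a) * x v := by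
      intro a ha
      have hsplit : ∀ f : Fin n → ℝ, ∑ b, f b = ∑ b ∈ Finset.univ \ {v}, f b + f v := by
        intro f
        exact Finset.sum_eq_sum_sdiff_singleton_add (Finset.mem_univ v) f
      calc (A' *ᵥ x) a = ∑ b, A' a b * x b := rfl
        _ = ∑ b ∈ Finset.univ \ {v}, A' a b * x b + A' a v * x v := hsplit _
        _ = ∑ b ∈ Finset.univ \ {v}, A a b * x b + A u a * x v := by
            congr 1
            · apply Finset.sum_congr rfl
              intro b hb
              rw [Finset.mem_sdiff, Finset.mem_singleton] at hb
              rw [hA'ab a ha b hb.2]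
            · rw [hA'av a ha]
        _ = (∑ b, A a b * x b) - A a v * x v + A u a * x v := by
            rw [hsplit (fun b => A a b * x b)]
            ring
        _ = ρ * x a + (A u a - A v a) * x v := by
            rw [hAx a, hsymA a v]
            ring
    -- Rayleigh quotient of A' at x
    have hsplit : ∀ f : Fin n → ℝ, ∑ a, f a = ∑ a ∈ Finset.univ \ {v}, f a + f v :=
      fun f => Finset.sum_eq_sum_sdiff_singleton_add (Finset.mem_univ v) f
    have hxx : ∑ a, (x a * x a) = (1:ℝ) := hx2
    have hs1 : ∑ a, (ρ * (x a * x a) + (A u a * x a) * x v - (A v a * x a) * x v)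
        = ρ * (∑ a, (x a * x a)) + (∑ a, A u a * x a) * x v - (∑ a, A v a * x a) * x v := by
      rw [Finset.sum_sub_distrib, Finset.sum_add_distrib, ← Finset.mul_sum, ← Finset.sum_mul,
        ← Finset.sum_mul]
    have hs2 : ∑ a, (ρ * (x a * x a) + (A u a * x a) * x v - (A v a * x a) * x v)
        = ρ + ρ * x u * x v - ρ * x v * x v := by
      rw [hs1, hxx, hAx u, hAx v]; ring
    have hray : x ⬝ᵥ (A' *ᵥ x) = ρ + 2 * ρ * x v * (x u - x v) := by
      calc x ⬝ᵥ (A' *ᵥ x) = ∑ a, x a * (A' *ᵥ x) a := rfl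
        _ = ∑ a ∈ Finset.univ \ {v}, x a * (A' *ᵥ x) a + x v * (A' *ᵥ x) v :=
            hsplit (fun a => x a * (A' *ᵥ x) a)
        _ = ∑ a ∈ Finset.univ \ {v},
              (ρ * (x a * x a) + (A u a * x a) * x v - (A v a * x a) * x v)
            + x v * (ρ * x u) := by
            congr 1
            · apply Finset.sum_congr rfl
              intro a ha
              rw [Finset.mem_sdiff, Finset.mem_singleton] at ha
              rw [hmv_a a ha.2]; ring
            · rw [hmv_v]
        _ = (∑ a, (ρ * (x a * x a) + (A u a * x a) * x v - (A v a * x a) * x v))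
            - (ρ * (x v * x v) + (A u v * x v) * x v - (A v v * x v) * x v)
            + x v * (ρ * x u) := by
            rw [hsplit (fun a => ρ * (x a * x a) + (A u a * x a) * x v - (A v a * x a) * x v)]
            ring
        _ = ρ + 2 * ρ * x v * (x u - x v) := by
            rw [hs2, hAuv, hAvv]; ring
    -- compare with the spectral radius
    have hspecG' : specRad G' = sSup (spectrum ℝ A') := by rw [hA'def]; rfl
    have hle3 : x ⬝ᵥ (A' *ᵥ x) ≤ specRad G' := by
      have h0 := (herm_rayleigh A' (adjMat_isHermitian' G' A' hA'def) x).1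
      rw [hx2, mul_one] at h0
      rw [hspecG']
      exact h0
    have hgeρ : ρ ≤ x ⬝ᵥ (A' *ᵥ x) := by
      rw [hray]
      have haux : 0 ≤ ρ * x v * (x u - x v) :=
        mul_nonneg (mul_nonneg hρpos.le (hxpos v).le) (sub_nonneg.2 hle2)
      linarith
    have heq1 : specRad G' = ρ := le_antisymm hspec (le_trans hgeρ hle3)
    have heig' : A' *ᵥ x = specRad G' • x := by
      rw [hspecG']
      exact (herm_rayleigh A' (adjMat_isHermitian' G' A' hA'def) x).2 hx2
        (by rw [← hspecG', heq1]; exact hgeρ)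
    -- read off coordinates
    have hcoord : ∀ w, w ≠ v → A u w = A v w := by
      intro w hw
      have h1 : (A' *ᵥ x) w = ρ * x w := by
        rw [heig']
        rw [Pi.smul_apply, smul_eq_mul, heq1]
      have h2 := hmv_a w hw
      rw [h1] at h2
      have h3 : (A u w - A v w) * x v = 0 := by linarith
      rcases mul_eq_zero.1 h3 with h4 | h4
      · linarith
      · exact absurd h4 (ne_of_gt (hxpos v))
    ext w
    simp only [Set.mem_setOf_eq]
    by_cases hwv : w = v
    · subst hwv
      exact iff_of_false hnadj (G.loopless.irrefl w)
    · have hc := hcoord w hwv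
      by_cases hu' : G.Adj u w <;> by_cases hv' : G.Adj v w
      · exact iff_of_true hu' hv'
      · exfalso
        have e1 : A u w = 1 := adjMat_apply' G u w hu'
        have e2 : A v w = 0 := adjMat_apply'' G v w hv'
        rw [e1, e2] at hc
        norm_num at hc
      · exfalso
        have e1 : A u w = 0 := adjMat_apply'' G u w hu'
        have e2 : A v w = 1 := adjMat_apply' G v w hv'
        rw [e1, e2] at hc
        norm_num at hc
      · exact iff_of_false hu' hv'
  -- assemble the two bullets
  have bullet1 : ∀ u v : Fin n, u ∈ R → v ∈ R → u ≠ v → ¬ G.Adj u v →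
      {w | G.Adj u w} = {w | G.Adj v w} := by
    intro u v hu hv hne hnadj
    rcases le_total (x v) (x u) with hle2 | hle2
    · exact key u v hu hv hne hnadj hle2
    · exact (key v u hv hu hne.symm (fun hadj => hnadj hadj.symm) hle2).symm
  refine ⟨bullet1, ?_⟩
  intro a b c hab hbc hac
  have hGac : G.Adj (a : Fin n) (c : Fin n) := hac
  have hGab : ¬ G.Adj (a : Fin n) (b : Fin n) := hab
  have hGbc : ¬ G.Adj (b : Fin n) (c : Fin n) := hbc
  by_cases h1 : (a : Fin n) = (b : Fin n)
  · exact hGbc (h1 ▸ hGac)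
  · have hN := bullet1 (a : Fin n) (b : Fin n) a.2 b.2 h1 hGab
    have : (c : Fin n) ∈ {w | G.Adj (a : Fin n) w} := hGac
    rw [hN] at this
    exact hGbc this
end
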